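/- Every non-trivial cutset in 𝒫(ℕ) contains a chain (under inclusion) of cardinality 2^{ℵ₀} as well as an antichain of cardinality 2^{ℵ₀}. -/

import Mathlib

/-!
Every set `B ⊆ ℕ` lies on the chain `k ↦ (B \ [0, -k)) ∪ [0, k)`, `k : ℤ`, which starts at `∅` and
ends at `ℕ`. A maximal chain extending it meets the cutset in some `X ≠ ∅, ℕ`, and comparability
with the whole chain squeezes `X` between two finite modifications of `B`; so the cutset contains
a set `B \ F ∪ G` with `F`, `G` finite. Applied to the Dedekind cuts of `ℚ` (a chain of `2^ℵ₀`
sets, any two differing infinitely), pigeonholing the countably many pairs `(F, G)` turns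
`r ↦ cut r \ F ∪ G` into a monotone injection of `2^ℵ₀` reals into the cutset. Applied to the
branches of the binary tree (an almost disjoint family of `2^ℵ₀` sets) no pigeonhole is needed:
finite modifications of almost disjoint sets are pairwise incomparable.
-/

open Set
open scoped Cardinal

universe u

def IsCutset {α : Type*} (C : Set (Set α)) : Prop :=
  ∀ M : Set (Set α), IsMaxChain (· ⊆ ·) M → (C ∩ M).Nonempty

theorem Set.diff_subset_union_of_diff_union_subset {α : Type*} {A A' F F' G G' : Set α}
    (h : A \ F ∪ G ⊆ A' \ F' ∪ G') : A \ A' ⊆ F ∪ G' := by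
  rintro z ⟨hzA, hzA'⟩
  by_contra hz
  rcases h (Or.inl ⟨hzA, fun hzF => hz (Or.inl hzF)⟩) with hz' | hzG'
  · exact hzA' hz'.1
  · exact hz (Or.inr hzG')

theorem Cardinal.exists_continuum_le_mk_preimage_singleton {α β : Type u} [Countable β]
    (f : α → β) (hα : 𝔠 ≤ #α) : ∃ b, 𝔠 ≤ #(f ⁻¹' {b}) := by
  have hcof : ℵ₀ < (𝔠 : Cardinal).ord.cof := by
    simpa [Cardinal.two_power_aleph0] using Cardinal.lt_cof_ord_power le_rfl one_lt_two
  exact Cardinal.infinite_pigeonhole_card f 𝔠 hα Cardinal.aleph0_le_continuum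
    (Cardinal.mk_le_aleph0.trans_lt hcof)

namespace IsCutset

section

variable {α : Type*} {C : Set (Set α)}

theorem exists_mem_comparable (hC : IsCutset C) {K : Set (Set α)} (hK : IsChain (· ⊆ ·) K) :
    ∃ X ∈ C, ∀ Y ∈ K, X ⊆ Y ∨ Y ⊆ X := by
  obtain ⟨M, hM, hKM⟩ := hK.exists_maxChain
  obtain ⟨X, hXC, hXM⟩ := hC M hM
  refine ⟨X, hXC, fun Y hY => ?_⟩
  rcases eq_or_ne X Y with rfl | hne
  · exact Or.inl subset_rfl
  · exact hM.isChain hXM (hKM hY) hne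

theorem exists_mem_between (hC : IsCutset C) (huniv : univ ∉ C) (hempty : ∅ ∉ C) {ι : Type*}
    {f : ι → Set α} (hf : IsChain (· ⊆ ·) (range f)) (hbot : ⋂ i, f i = ∅)
    (htop : ⋃ i, f i = univ) : ∃ X ∈ C, ∃ i j, f i ⊆ X ∧ X ⊆ f j := by
  obtain ⟨X, hXC, hX⟩ := hC.exists_mem_comparable hf
  have hcomp : ∀ i, X ⊆ f i ∨ f i ⊆ X := fun i => hX _ (mem_range_self i)
  have hbelow : ∃ i, f i ⊆ X := by
    by_contra! h
    have hX : X ⊆ ⋂ i, f i := subset_iInter fun i => (hcomp i).resolve_right (h i)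
    rw [hbot, subset_empty_iff] at hX
    exact hempty (hX ▸ hXC)
  have habove : ∃ j, X ⊆ f j := by
    by_contra! h
    have hX : ⋃ i, f i ⊆ X := iUnion_subset fun i => (hcomp i).resolve_left (h i)
    rw [htop, univ_subset_iff] at hX
    exact huniv (hX ▸ hXC)
  obtain ⟨i, hi⟩ := hbelow
  obtain ⟨j, hj⟩ := habove
  exact ⟨X, hXC, i, j, hi, hj⟩

end

theorem exists_diff_union_mem {C : Set (Set ℕ)} (hC : IsCutset C) (huniv : univ ∉ C)
    (hempty : ∅ ∉ C) (B : Set ℕ) : ∃ F G : Finset ℕ, B \ F ∪ G ∈ C := by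
  let f : ℤ → Set ℕ := fun k => B \ Iio (-k).toNat ∪ Iio k.toNat
  have hf : Monotone f := fun k l hkl =>
    union_subset_union (sdiff_subset_sdiff_right (Iio_subset_Iio (by omega)))
      (Iio_subset_Iio (by omega))
  have hbot : ⋂ k, f k = ∅ := by
    refine eq_empty_of_forall_notMem fun z hz => ?_
    have := mem_iInter.1 hz (-(z + 1 : ℕ))
    simp [f] at this
  have htop : ⋃ k, f k = univ :=
    eq_univ_of_forall fun z => mem_iUnion.2 ⟨z + 1, Or.inr (by simp)⟩
  obtain ⟨X, hXC, i, j, hiX, hXj⟩ := hC.exists_mem_between huniv hempty hf.isChain_range hbot htop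
  have hF : (B \ X).Finite := (finite_Iio (-i).toNat).subset fun z hz =>
    by_contra fun hzi => hz.2 (hiX (Or.inl ⟨hz.1, hzi⟩))
  have hG : (X \ B).Finite := (finite_Iio j.toNat).subset fun z hz =>
    (hXj hz.1).resolve_left fun hzB => hz.2 hzB.1
  refine ⟨hF.toFinset, hG.toFinset, ?_⟩
  rwa [Finite.coe_toFinset, Finite.coe_toFinset, Set.sdiff_sdiff_right_self, inter_comm,
    inter_union_sdiff]

end IsCutset

section

variable {ι α : Type u} {C : Set (Set α)}

theorem exists_isChain_subset_mk_eq_continuum [LinearOrder ι] [Countable α] (hι : #ι = 𝔠)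
    (hC : ∀ B : Set α, ∃ F G : Finset α, B \ F ∪ G ∈ C) {A : ι → Set α} (hA : Monotone A)
    (hgap : ∀ ⦃i j⦄, i < j → (A j \ A i).Infinite) :
    ∃ 𝒜 ⊆ C, IsChain (· ⊆ ·) 𝒜 ∧ #𝒜 = 𝔠 := by
  choose F G hFG using fun i => hC (A i)
  obtain ⟨⟨F₀, G₀⟩, hP⟩ :=
    Cardinal.exists_continuum_le_mk_preimage_singleton (fun i => (F i, G i)) hι.ge
  set P := (fun i => (F i, G i)) ⁻¹' {(F₀, G₀)}
  let X : ι → Set α := fun i => A i \ F₀ ∪ G₀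
  have hXmono : Monotone X := fun _ _ h =>
    union_subset_union_left _ (sdiff_subset_sdiff_left (hA h))
  have hXinj : InjOn X P := by
    intro i _ j _ hij
    by_contra hne
    have hfin : (↑F₀ ∪ ↑G₀ : Set α).Finite := F₀.finite_toSet.union G₀.finite_toSet
    rcases lt_or_gt_of_ne hne with h | h
    · exact hgap h (hfin.subset (diff_subset_union_of_diff_union_subset hij.ge))
    · exact hgap h (hfin.subset (diff_subset_union_of_diff_union_subset hij.le))
  refine ⟨X '' P, ?_, ?_, ?_⟩
  · rintro _ ⟨i, hi, rfl⟩
    obtain ⟨rfl, rfl⟩ := Prod.mk.inj hi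
    exact hFG i
  · rintro _ ⟨i, -, rfl⟩ _ ⟨j, -, rfl⟩ -
    exact (le_total i j).imp (fun h => hXmono h) (fun h => hXmono h)
  · rw [Cardinal.mk_image_eq_of_injOn X P hXinj]
    exact le_antisymm (hι ▸ Cardinal.mk_set_le P) hP

theorem exists_isAntichain_subset_mk_eq
    (hC : ∀ B : Set α, ∃ F G : Finset α, B \ F ∪ G ∈ C) {A : ι → Set α}
    (hA : ∀ ⦃i j⦄, i ≠ j → (A i \ A j).Infinite) :
    ∃ ℬ ⊆ C, IsAntichain (· ⊆ ·) ℬ ∧ #ℬ = #ι := by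
  choose F G hFG using fun i => hC (A i)
  let X : ι → Set α := fun i => A i \ F i ∪ G i
  have hX : ∀ i j, X i ⊆ X j → i = j := fun i j h => by_contra fun hne =>
    hA hne (((F i).finite_toSet.union (G j).finite_toSet).subset
      (diff_subset_union_of_diff_union_subset h))
  refine ⟨range X, range_subset_iff.2 hFG, ?_, Cardinal.mk_range_eq X fun i j h => hX i j h.le⟩
  rintro _ ⟨i, rfl⟩ _ ⟨j, rfl⟩ hne hsub
  exact hne (congrArg X (hX i j hsub))

end

def ratCut (r : ℝ) : Set ℕ := {n | (Denumerable.ofNat ℚ n : ℝ) < r}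

theorem ratCut_mono : Monotone ratCut := fun _ _ h _ hn => lt_of_lt_of_le hn h

theorem ratCut_diff_infinite {r s : ℝ} (h : r < s) : (ratCut s \ ratCut r).Infinite := by
  obtain ⟨q₁, hrq₁, hq₁s⟩ := exists_rat_btwn h
  obtain ⟨q₂, hq₁q₂, hq₂s⟩ := exists_rat_btwn hq₁s
  have hsurj : range (Denumerable.ofNat ℚ) = univ :=
    range_eq_univ.2 (Denumerable.eqv ℚ).symm.surjective
  refine ((Ioo_infinite (by exact_mod_cast hq₁q₂)).preimage (hsurj ▸ subset_univ _)).mono ?_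
  rintro n ⟨h₁, h₂⟩
  exact ⟨(Rat.cast_lt.2 h₂).trans hq₂s, (hrq₁.trans (Rat.cast_lt.2 h₁)).not_gt⟩

def prefixCodes (x : ℕ → Bool) : Set ℕ :=
  range fun n => Encodable.encode ((List.range n).map x)

theorem prefixCodes_diff_infinite {x y : ℕ → Bool} (hxy : x ≠ y) :
    (prefixCodes x \ prefixCodes y).Infinite := by
  obtain ⟨k, hk⟩ := Function.ne_iff.1 hxy
  let c : ℕ → ℕ := fun n => Encodable.encode ((List.range n).map x)
  have hc : Function.Injective c := fun m n h => by
    simpa using congrArg List.length (Encodable.encode_injective h)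
  refine ((Ioi_infinite k).image hc.injOn).mono ?_
  rintro _ ⟨n, hkn, rfl⟩
  refine ⟨⟨n, rfl⟩, ?_⟩
  rintro ⟨m, hm⟩
  have hlists : (List.range m).map y = (List.range n).map x := Encodable.encode_injective hm
  obtain rfl : m = n := by simpa using congrArg List.length hlists
  exact hk (List.map_inj_left.1 hlists k (List.mem_range.2 hkn)).symm

/-- Every non-trivial cutset in 𝒫(ℕ) contains a chain of cardinality
2^{ℵ₀} as well as an antichain of cardinality 2^{ℵ₀}. -/
theorem cutset_nat_contains_chain_and_antichain_continuum (C : Set (Set ℕ))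
    (hcut : ∀ M : Set (Set ℕ), IsMaxChain (· ⊆ ·) M → (C ∩ M).Nonempty)
    (huniv : Set.univ ∉ C) (hempty : ∅ ∉ C) :
    (∃ 𝒜 ⊆ C, IsChain (· ⊆ ·) 𝒜 ∧ Cardinal.mk 𝒜 = 2 ^ Cardinal.aleph0) ∧
    (∃ ℬ ⊆ C, IsAntichain (· ⊆ ·) ℬ ∧ Cardinal.mk ℬ = 2 ^ Cardinal.aleph0) := by
  have hC := IsCutset.exists_diff_union_mem hcut huniv hempty
  rw [Cardinal.two_power_aleph0]
  refine ⟨exists_isChain_subset_mk_eq_continuum Cardinal.mk_real hC ratCut_mono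
    fun _ _ => ratCut_diff_infinite, ?_⟩
  obtain ⟨ℬ, hℬC, hℬ, hcard⟩ := exists_isAntichain_subset_mk_eq hC
    fun _ _ => prefixCodes_diff_infinite
  exact ⟨ℬ, hℬC, hℬ, by simpa using hcard⟩
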